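/- Let f : ℝ^{m×n} → ℝ be convex and differentiable and let 𝒳* be the set of minimizers of f over the unit trace-norm ball. Then for every X* ∈ 𝒳*, rank(X*) ≤ #σ_1(∇f(X*)), the multiplicity of the largest singular value of ∇f(X*). Moreover, if ∇f(X*) ≠ 0 for every X* ∈ 𝒳*, then max{rank(X) : X ∈ 𝒳*} ≤ min{#σ_1(∇f(Y)) : Y ∈ 𝒳*}. -/

import Mathlib

/- Common definitions: Frobenius norm and inner product, singular values in
non-increasing order, trace (nuclear) norm, multiplicity of the top singular
value, Euclidean projection onto the trace-norm ball, the spectrahedron and its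
projection, sorted eigenvalues of symmetric matrices, best rank-`r`
approximations, and the singular-value soft-thresholding (prox) operator. -/

open scoped BigOperators
open Matrix MeasureTheory ProbabilityTheory

attribute [local instance] Matrix.normedAddCommGroup Matrix.normedSpace

noncomputable section

/-- Frobenius norm of a real matrix. -/
def frobNorm {m n : ℕ} (X : Matrix (Fin m) (Fin n) ℝ) : ℝ :=
  Real.sqrt (∑ i, ∑ j, (X i j) ^ 2)

/-- Frobenius inner product of two real matrices. -/
def frobInner {m n : ℕ} (A B : Matrix (Fin m) (Fin n) ℝ) : ℝ :=
  ∑ i, ∑ j, A i j * B i j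

/-- The continuous linear functional `H ↦ ⟨G, H⟩` (Frobenius inner product);
`HasFDerivAt f (frobCLM G) X` says that `G` is the gradient of `f` at `X`. -/
def frobCLM {m n : ℕ} (G : Matrix (Fin m) (Fin n) ℝ) :
    Matrix (Fin m) (Fin n) ℝ →L[ℝ] ℝ :=
  LinearMap.toContinuousLinearMap
    { toFun := fun H => frobInner G H
      map_add' := fun x y => by
        simp [frobInner, Matrix.add_apply, mul_add, Finset.sum_add_distrib]
      map_smul' := fun c x => by
        simp [frobInner, Matrix.smul_apply, smul_eq_mul, Finset.mul_sum, mul_left_comm] }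

/-- The non-increasing (descending) rearrangement of a finite tuple of reals. -/
def sortedDesc {N : ℕ} (f : Fin N → ℝ) : Fin N → ℝ :=
  fun i => f (Tuple.sort f i.rev)

/-- The singular values of a real `m × n` matrix in non-increasing order
(the square roots of the eigenvalues of `Xᵀ * X`), padded with zeros so that
there are `n` of them. -/
def svalsFin {m n : ℕ} (X : Matrix (Fin m) (Fin n) ℝ) : Fin n → ℝ :=
  sortedDesc (fun i => Real.sqrt ((show (Xᵀ * X).IsHermitian by
    simpa [Matrix.conjTranspose_eq_transpose_of_trivial] using
      Matrix.isHermitian_conjTranspose_mul_self X).eigenvalues i))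

/-- `svalI X i` is the `(i+1)`-th largest singular value of `X` (i.e. `0`-indexed:
`svalI X 0 = σ₁(X)`), interpreted as `0` when the index is out of range. -/
def svalI {m n : ℕ} (X : Matrix (Fin m) (Fin n) ℝ) (i : ℕ) : ℝ :=
  if h : i < n then svalsFin X ⟨i, h⟩ else 0

/-- The trace norm (nuclear norm): the sum of the singular values. -/
def traceNorm {m n : ℕ} (X : Matrix (Fin m) (Fin n) ℝ) : ℝ :=
  ∑ i, svalsFin X i

/-- `#σ₁(X)`: the multiplicity of the largest singular value of `X`. -/
def multTop {m n : ℕ} (X : Matrix (Fin m) (Fin n) ℝ) : ℕ :=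
  Nat.card {i : Fin n // svalsFin X i = svalI X 0}

/-- `P` is the Euclidean (Frobenius) projection of `X` onto the trace-norm ball
of radius `τ`. -/
def IsTraceBallProj {m n : ℕ} (τ : ℝ) (X P : Matrix (Fin m) (Fin n) ℝ) : Prop :=
  traceNorm P ≤ τ ∧ ∀ Z, traceNorm Z ≤ τ → frobNorm (X - P) ≤ frobNorm (X - Z)

/-- The Euclidean projection onto the trace-norm ball of radius `τ`. -/
def projTraceBall {m n : ℕ} (τ : ℝ) (X : Matrix (Fin m) (Fin n) ℝ) :
    Matrix (Fin m) (Fin n) ℝ :=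
  open scoped Classical in
  if h : ∃ P, IsTraceBallProj τ X P then h.choose else 0

/-- `Y` is a best rank-`r` approximation of `X` in Frobenius norm. -/
def IsBestRankApprox {m n : ℕ} (r : ℕ) (X Y : Matrix (Fin m) (Fin n) ℝ) : Prop :=
  Y.rank ≤ r ∧ ∀ Z : Matrix (Fin m) (Fin n) ℝ, Z.rank ≤ r → frobNorm (X - Y) ≤ frobNorm (X - Z)

/-- The spectrahedron: positive semidefinite matrices of unit trace. -/
def SpectraSet (n : ℕ) : Set (Matrix (Fin n) (Fin n) ℝ) :=
  {X | X.PosSemidef ∧ X.trace = 1}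

/-- `P` is the Euclidean (Frobenius) projection of `X` onto the spectrahedron. -/
def IsSpectraProj {n : ℕ} (X P : Matrix (Fin n) (Fin n) ℝ) : Prop :=
  P ∈ SpectraSet n ∧ ∀ Z ∈ SpectraSet n, frobNorm (X - P) ≤ frobNorm (X - Z)

/-- The Euclidean projection onto the spectrahedron. -/
def projSpectra {n : ℕ} (X : Matrix (Fin n) (Fin n) ℝ) : Matrix (Fin n) (Fin n) ℝ :=
  open scoped Classical in
  if h : ∃ P, IsSpectraProj X P then h.choose else 0

/-- `evalI X i` is the `(i+1)`-th largest eigenvalue of the symmetric matrix `X`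
(`0`-indexed: `evalI X 0 = λ₁(X)`, `evalI X (n-1) = λ_n(X)`); junk value `0` if
`X` is not symmetric or the index is out of range. -/
def evalI {n : ℕ} (X : Matrix (Fin n) (Fin n) ℝ) (i : ℕ) : ℝ :=
  open scoped Classical in
  if h : i < n then
    (if hX : X.IsHermitian then sortedDesc hX.eigenvalues ⟨i, h⟩ else 0)
  else 0

/-- The multiplicity of the smallest eigenvalue of a symmetric matrix. -/
def multMinEig {n : ℕ} (X : Matrix (Fin n) (Fin n) ℝ) : ℕ :=
  Nat.card {i : Fin n // evalI X i = evalI X (n - 1)}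

/-- `Y` is the value at `X` of the singular-value soft-thresholding operator
`𝒯_η`, characterized as the proximal mapping of `η‖·‖_*`:
the (unique) minimizer of `Z ↦ ½‖X − Z‖_F² + η‖Z‖_*`. -/
def IsSVT {m n : ℕ} (η : ℝ) (X Y : Matrix (Fin m) (Fin n) ℝ) : Prop :=
  ∀ Z : Matrix (Fin m) (Fin n) ℝ,
    frobNorm (X - Y) ^ 2 / 2 + η * traceNorm Y ≤ frobNorm (X - Z) ^ 2 / 2 + η * traceNorm Z

/-- The singular-value soft-thresholding operator `𝒯_η`. -/
def softThresh {m n : ℕ} (η : ℝ) (X : Matrix (Fin m) (Fin n) ℝ) :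
    Matrix (Fin m) (Fin n) ℝ :=
  open scoped Classical in
  if h : ∃ Y, IsSVT η X Y then h.choose else 0

instance {m n : ℕ} : MeasurableSpace (Matrix (Fin m) (Fin n) ℝ) :=
  inferInstanceAs (MeasurableSpace (Fin m → Fin n → ℝ))

end

/-! A minimizer `X*` of `f` over the trace-norm ball also minimizes the linearization
`⟨∇f(X*), ·⟩` there (first-order optimality), and by convexity of `f` so does every other
minimizer. Flipping the sign of `G = ∇f`, it remains to see that a matrix `X` of the ball that
maximizes `⟨G, ·⟩` has rank at most `#σ₁(G)`. That maximum is `σ₁(G)`, attained at a rank-one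
matrix built from a top singular pair. Expanding `⟨G, X⟩ = ∑ⱼ ⟨G uⱼ, X uⱼ⟩` along an
orthonormal eigenbasis `uⱼ` of `XᵀX`, each term is at most `σ₁(G) ‖X uⱼ‖` by Cauchy–Schwarz,
and these bounds add up to `σ₁(G) ‖X‖_* ≤ σ₁(G)`. Hence all of them are equalities, which puts
every `uⱼ` with `X uⱼ ≠ 0` into the top eigenspace of `GᵀG`: `rank X` orthonormal vectors in a
space of dimension `#σ₁(G)`. -/

namespace Matrix

variable {ι κ : Type*} [Fintype ι] [Fintype κ]

theorem mulVec_dotProduct_mulVec {κ' : Type*} [Fintype κ'] (A : Matrix ι κ ℝ)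
    (B : Matrix ι κ' ℝ) (v : κ → ℝ) (w : κ' → ℝ) :
    (A *ᵥ v) ⬝ᵥ (B *ᵥ w) = v ⬝ᵥ ((Aᵀ * B) *ᵥ w) := by
  rw [← mulVec_mulVec, dotProduct_mulVec v, vecMul_transpose]

theorem dotProduct_le_sqrt_mul_sqrt (p q : ι → ℝ) :
    p ⬝ᵥ q ≤ √(p ⬝ᵥ p) * √(q ⬝ᵥ q) := by
  simpa [dotProduct, sq] using Real.sum_mul_le_sqrt_mul_sqrt Finset.univ p q

variable [DecidableEq ι]

theorem IsHermitian.exists_orthogonal_diagonalization {S : Matrix ι ι ℝ} (hS : S.IsHermitian) :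
    ∃ U : Matrix ι ι ℝ, Uᵀ * U = 1 ∧ S = U * diagonal hS.eigenvalues * Uᵀ := by
  refine ⟨hS.eigenvectorUnitary, ?_, ?_⟩
  · simpa [star_eq_conjTranspose, conjTranspose_eq_transpose_of_trivial] using
      (mem_unitaryGroup_iff').mp hS.eigenvectorUnitary.2
  · simpa [star_eq_conjTranspose, conjTranspose_eq_transpose_of_trivial] using hS.spectral_theorem

theorem dotProduct_mulVec_conj_diagonal (U : Matrix ι ι ℝ) (e v : ι → ℝ) :
    v ⬝ᵥ ((U * diagonal e * Uᵀ) *ᵥ v) = ∑ j, e j * (Uᵀ *ᵥ v) j ^ 2 := by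
  rw [← mulVec_mulVec, ← mulVec_mulVec, dotProduct_mulVec, ← mulVec_transpose]
  simp only [dotProduct, mulVec_diagonal, sq]
  exact Finset.sum_congr rfl fun _ _ => by ring

variable {U : Matrix ι ι ℝ}

theorem transpose_mulVec_dotProduct_transpose_mulVec (hU : Uᵀ * U = 1) (v w : ι → ℝ) :
    (Uᵀ *ᵥ v) ⬝ᵥ (Uᵀ *ᵥ w) = v ⬝ᵥ w := by
  rw [mulVec_dotProduct_mulVec, transpose_transpose, mul_eq_one_comm.mp hU, one_mulVec]

theorem sum_sq_transpose_mulVec (hU : Uᵀ * U = 1) (v : ι → ℝ) :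
    ∑ j, (Uᵀ *ᵥ v) j ^ 2 = v ⬝ᵥ v := by
  simpa [dotProduct, sq] using transpose_mulVec_dotProduct_transpose_mulVec hU v v

theorem transpose_dotProduct_transpose (hU : Uᵀ * U = 1) (i j : ι) :
    Uᵀ i ⬝ᵥ Uᵀ j = (1 : Matrix ι ι ℝ) i j := by
  rw [← hU, mul_apply']
  rfl

theorem conj_diagonal_mul_conj_diagonal (hU : Uᵀ * U = 1) (e f : ι → ℝ) :
    (U * diagonal e * Uᵀ) * (U * diagonal f * Uᵀ) = U * diagonal (e * f) * Uᵀ := by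
  calc (U * diagonal e * Uᵀ) * (U * diagonal f * Uᵀ)
      = U * diagonal e * (Uᵀ * U) * diagonal f * Uᵀ := by simp only [Matrix.mul_assoc]
    _ = U * diagonal (e * f) * Uᵀ := by
      rw [hU, Matrix.mul_one, Matrix.mul_assoc U, diagonal_mul_diagonal]; rfl

theorem conj_diagonal_mulVec_transpose (hU : Uᵀ * U = 1) (e : ι → ℝ) (j : ι) :
    (U * diagonal e * Uᵀ) *ᵥ Uᵀ j = e j • Uᵀ j := by
  have hMU : (U * diagonal e * Uᵀ) * U = U * diagonal e := by
    rw [Matrix.mul_assoc, hU, Matrix.mul_one]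
  ext i
  calc ((U * diagonal e * Uᵀ) *ᵥ Uᵀ j) i = ((U * diagonal e * Uᵀ) * U) i j := by
        simp only [mulVec, dotProduct, mul_apply, transpose_apply]
    _ = (e j • Uᵀ j) i := by simp [hMU, mul_diagonal, mul_comm]

variable {S : Matrix ι ι ℝ} {ν : ι → ℝ}

theorem posSemidef_smul_one_sub_of_le (hU : Uᵀ * U = 1) (hS : S = U * diagonal ν * Uᵀ)
    {c : ℝ} (hν : ∀ j, ν j ≤ c) : (c • 1 - S).PosSemidef := by
  have hconj : c • 1 - S = U * diagonal (fun j => c - ν j) * Uᵀ := by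
    rw [← diagonal_sub, ← smul_one_eq_diagonal, Matrix.mul_sub, Matrix.sub_mul, Matrix.mul_smul,
      Matrix.mul_one, Matrix.smul_mul, mul_eq_one_comm.mp hU, hS]
  rw [hconj]
  simpa [conjTranspose_eq_transpose_of_trivial] using
    (posSemidef_diagonal_iff.mpr fun j => sub_nonneg.mpr (hν j)).mul_mul_conjTranspose_same U

theorem finrank_eigenspace_le_card (hU : Uᵀ * U = 1) (hS : S = U * diagonal ν * Uᵀ) (c : ℝ) :
    Module.finrank ℝ (Module.End.eigenspace (toLin' S) c) ≤ Fintype.card {j // ν j = c} := by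
  refine (Submodule.finrank_mono ?_).trans (finrank_range_le_card fun j : {j // ν j = c} => Uᵀ j)
  intro v hv
  rw [Module.End.mem_eigenspace_iff, toLin'_apply] at hv
  have hcoord : ∀ j, ν j ≠ c → (Uᵀ *ᵥ v) j = 0 := by
    intro j hj
    have hUS : Uᵀ * S = diagonal ν * Uᵀ := by
      rw [hS, ← Matrix.mul_assoc, ← Matrix.mul_assoc, hU, Matrix.one_mul]
    have h : ν j * (Uᵀ *ᵥ v) j = c * (Uᵀ *ᵥ v) j := by
      rw [← mulVec_diagonal, mulVec_mulVec, ← hUS, ← mulVec_mulVec, hv, mulVec_smul]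
      rfl
    have h' : (ν j - c) * (Uᵀ *ᵥ v) j = 0 := by linear_combination h
    exact (mul_eq_zero.mp h').resolve_left (sub_ne_zero.mpr hj)
  have hv' : v = ∑ j, (Uᵀ *ᵥ v) j • Uᵀ j := by
    conv_lhs => rw [← one_mulVec v, ← mul_eq_one_comm.mp hU, ← mulVec_mulVec, mulVec_eq_sum]
    simp only [op_smul_eq_smul]
  rw [hv']
  refine Submodule.sum_mem _ fun j _ => ?_
  by_cases hj : ν j = c
  · exact Submodule.smul_mem _ _ (Submodule.subset_span ⟨⟨j, hj⟩, rfl⟩)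
  · simp [hcoord j hj]

end Matrix

theorem frobCLM_apply {m n : ℕ} (G H : Matrix (Fin m) (Fin n) ℝ) :
    frobCLM G H = frobInner G H := rfl

theorem frobInner_sub_right {m n : ℕ} (G A B : Matrix (Fin m) (Fin n) ℝ) :
    frobInner G (A - B) = frobInner G A - frobInner G B := by
  simp [frobInner, mul_sub]

theorem frobInner_eq_sum_mulVec_dotProduct {m n : ℕ} {U : Matrix (Fin n) (Fin n) ℝ}
    (hU : Uᵀ * U = 1) (G A : Matrix (Fin m) (Fin n) ℝ) :
    frobInner G A = ∑ j, (G *ᵥ Uᵀ j) ⬝ᵥ (A *ᵥ Uᵀ j) := by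
  have hrow : ∀ k, G k ⬝ᵥ A k = ∑ j, (G *ᵥ Uᵀ j) k * (A *ᵥ Uᵀ j) k := fun k => by
    rw [← transpose_mulVec_dotProduct_transpose_mulVec hU]
    simp only [dotProduct, mulVec, mul_comm (G k _), mul_comm (A k _)]
  calc frobInner G A = ∑ k, G k ⬝ᵥ A k := rfl
    _ = ∑ j, (G *ᵥ Uᵀ j) ⬝ᵥ (A *ᵥ Uᵀ j) := by
      simp only [hrow]
      exact Finset.sum_comm

section Gram

variable {m n : ℕ}

theorem isHermitian_transpose_mul_self (X : Matrix (Fin m) (Fin n) ℝ) : (Xᵀ * X).IsHermitian :=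
  isHermitian_conjTranspose_mul_self X

theorem eigenvalues_transpose_mul_self_nonneg {X : Matrix (Fin m) (Fin n) ℝ}
    (hX : (Xᵀ * X).IsHermitian) (j : Fin n) : 0 ≤ hX.eigenvalues j :=
  (posSemidef_conjTranspose_mul_self X).eigenvalues_nonneg j

theorem traceNorm_eq_sum_sqrt_eigenvalues {X : Matrix (Fin m) (Fin n) ℝ}
    (hX : (Xᵀ * X).IsHermitian) : traceNorm X = ∑ j, √(hX.eigenvalues j) :=
  Equiv.sum_comp (Fin.revPerm.trans (Tuple.sort _)) (fun j => √(hX.eigenvalues j))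

theorem rank_eq_card_eigenvalues_ne_zero {X : Matrix (Fin m) (Fin n) ℝ}
    (hX : (Xᵀ * X).IsHermitian) : X.rank = Fintype.card {j // hX.eigenvalues j ≠ 0} := by
  rw [← rank_transpose_mul_self, hX.rank_eq_card_non_zero_eigs]

theorem mulVec_transpose_dotProduct_self {X : Matrix (Fin m) (Fin n) ℝ}
    {U : Matrix (Fin n) (Fin n) ℝ} {μ : Fin n → ℝ} (hU : Uᵀ * U = 1)
    (hX : Xᵀ * X = U * diagonal μ * Uᵀ) (j : Fin n) :
    (X *ᵥ Uᵀ j) ⬝ᵥ (X *ᵥ Uᵀ j) = μ j := by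
  rw [mulVec_dotProduct_mulVec, hX, conj_diagonal_mulVec_transpose hU, dotProduct_smul,
    transpose_dotProduct_transpose hU, one_apply_eq, smul_eq_mul, mul_one]

end Gram

section Duality

variable {m n : ℕ}

theorem mulVec_transpose_dotProduct_le {c : ℝ} (hc : 0 ≤ c) {Q A : Matrix (Fin m) (Fin n) ℝ}
    (hQ : ∀ v, (Q *ᵥ v) ⬝ᵥ (Q *ᵥ v) ≤ c ^ 2 * (v ⬝ᵥ v)) {U : Matrix (Fin n) (Fin n) ℝ}
    {μ : Fin n → ℝ} (hU : Uᵀ * U = 1) (hA : Aᵀ * A = U * diagonal μ * Uᵀ) (j : Fin n) :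
    (Q *ᵥ Uᵀ j) ⬝ᵥ (A *ᵥ Uᵀ j) ≤ c * √(μ j) := by
  have hQj : √((Q *ᵥ Uᵀ j) ⬝ᵥ (Q *ᵥ Uᵀ j)) ≤ c := by
    calc √((Q *ᵥ Uᵀ j) ⬝ᵥ (Q *ᵥ Uᵀ j)) ≤ √(c ^ 2) := by
          refine Real.sqrt_le_sqrt ?_
          simpa [transpose_dotProduct_transpose hU] using hQ (Uᵀ j)
      _ = c := Real.sqrt_sq hc
  calc (Q *ᵥ Uᵀ j) ⬝ᵥ (A *ᵥ Uᵀ j)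
      ≤ √((Q *ᵥ Uᵀ j) ⬝ᵥ (Q *ᵥ Uᵀ j)) * √((A *ᵥ Uᵀ j) ⬝ᵥ (A *ᵥ Uᵀ j)) :=
        dotProduct_le_sqrt_mul_sqrt _ _
    _ ≤ c * √(μ j) := by
        rw [mulVec_transpose_dotProduct_self hU hA]
        gcongr

theorem frobInner_le_mul_traceNorm {c : ℝ} (hc : 0 ≤ c) {Q : Matrix (Fin m) (Fin n) ℝ}
    (hQ : ∀ v, (Q *ᵥ v) ⬝ᵥ (Q *ᵥ v) ≤ c ^ 2 * (v ⬝ᵥ v)) (A : Matrix (Fin m) (Fin n) ℝ) :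
    frobInner Q A ≤ c * traceNorm A := by
  have hA := isHermitian_transpose_mul_self A
  obtain ⟨U, hU, hAU⟩ := hA.exists_orthogonal_diagonalization
  rw [frobInner_eq_sum_mulVec_dotProduct hU, traceNorm_eq_sum_sqrt_eigenvalues hA,
    Finset.mul_sum]
  exact Finset.sum_le_sum fun j _ => mulVec_transpose_dotProduct_le hc hQ hU hAU j

theorem exists_frobInner_eq_traceNorm (A : Matrix (Fin m) (Fin n) ℝ) :
    ∃ Q : Matrix (Fin m) (Fin n) ℝ, (∀ v, (Q *ᵥ v) ⬝ᵥ (Q *ᵥ v) ≤ v ⬝ᵥ v) ∧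
      frobInner Q A = traceNorm A := by
  have hA := isHermitian_transpose_mul_self A
  obtain ⟨U, hU, hAU⟩ := hA.exists_orthogonal_diagonalization
  set μ := hA.eigenvalues
  -- `Q = A U diag(1/√μ) Uᵀ` is the polar factor of `A`; as `0⁻¹ = 0`, it vanishes on `ker A`
  set d : Fin n → ℝ := fun j => (√(μ j))⁻¹
  have hdμ : ∀ j, d j * μ j = √(μ j) := fun j => by
    rcases eq_or_ne (√(μ j)) 0 with h | h
    · simp [d, h]
    · calc d j * μ j = (√(μ j))⁻¹ * (√(μ j) * √(μ j)) := by
            rw [Real.mul_self_sqrt (eigenvalues_transpose_mul_self_nonneg hA j)]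
        _ = √(μ j) := by field_simp
  set P := U * diagonal d * Uᵀ
  have hPt : Pᵀ = P := by simp [P, transpose_mul, Matrix.mul_assoc]
  refine ⟨A * P, fun v => ?_, ?_⟩
  · have hQQ : (A * P)ᵀ * (A * P) = U * diagonal (d * μ * d) * Uᵀ := by
      rw [transpose_mul, hPt, Matrix.mul_assoc, ← Matrix.mul_assoc Aᵀ, hAU,
        ← Matrix.mul_assoc, conj_diagonal_mul_conj_diagonal hU,
        conj_diagonal_mul_conj_diagonal hU]
    rw [mulVec_dotProduct_mulVec, hQQ, dotProduct_mulVec_conj_diagonal,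
      ← sum_sq_transpose_mulVec hU v]
    refine Finset.sum_le_sum fun j _ => mul_le_of_le_one_left (sq_nonneg _) ?_
    simp only [Pi.mul_apply, hdμ]
    exact mul_inv_le_one
  · rw [frobInner_eq_sum_mulVec_dotProduct hU, traceNorm_eq_sum_sqrt_eigenvalues hA]
    refine Finset.sum_congr rfl fun j _ => ?_
    rw [← mulVec_mulVec, conj_diagonal_mulVec_transpose hU, mulVec_smul, smul_dotProduct,
      mulVec_transpose_dotProduct_self hU hAU, smul_eq_mul, hdμ]

theorem convexOn_traceNorm : ConvexOn ℝ Set.univ (traceNorm (m := m) (n := n)) := by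
  refine ⟨convex_univ, fun X _ Y _ a b ha hb hab => ?_⟩
  obtain ⟨Q, hQ, hQA⟩ := exists_frobInner_eq_traceNorm (a • X + b • Y)
  have hQ1 : ∀ v, (Q *ᵥ v) ⬝ᵥ (Q *ᵥ v) ≤ 1 ^ 2 * (v ⬝ᵥ v) := by simpa using hQ
  rw [← hQA, ← frobCLM_apply, map_add, map_smul, map_smul, frobCLM_apply, frobCLM_apply]
  simp only [smul_eq_mul]
  have hX := frobInner_le_mul_traceNorm zero_le_one hQ1 X
  have hY := frobInner_le_mul_traceNorm zero_le_one hQ1 Y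
  rw [one_mul] at hX hY
  gcongr

end Duality

theorem le_sortedDesc_zero {N : ℕ} (f : Fin N → ℝ) (j : Fin N) :
    f j ≤ sortedDesc f ⟨0, j.pos⟩ := by
  have hj : (Tuple.sort f).symm j ≤ Fin.rev ⟨0, j.pos⟩ := by
    rw [Fin.le_def, Fin.val_rev]
    have := ((Tuple.sort f).symm j).isLt
    simp only
    omega
  have h := Tuple.monotone_sort f hj
  rwa [Function.comp_apply, Equiv.apply_symm_apply] at h

section TopSingularValue

variable {m n : ℕ}

theorem svalI_zero_nonneg (G : Matrix (Fin m) (Fin n) ℝ) : 0 ≤ svalI G 0 := by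
  unfold svalI
  split_ifs
  exacts [Real.sqrt_nonneg _, le_rfl]

theorem sqrt_eigenvalues_le_svalI_zero {G : Matrix (Fin m) (Fin n) ℝ}
    (hG : (Gᵀ * G).IsHermitian) (j : Fin n) : √(hG.eigenvalues j) ≤ svalI G 0 := by
  rw [svalI, dif_pos j.pos]
  exact le_sortedDesc_zero (fun j => √(hG.eigenvalues j)) j

theorem eigenvalues_le_svalI_zero_sq {G : Matrix (Fin m) (Fin n) ℝ}
    (hG : (Gᵀ * G).IsHermitian) (j : Fin n) : hG.eigenvalues j ≤ svalI G 0 ^ 2 := by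
  rw [← Real.sq_sqrt (eigenvalues_transpose_mul_self_nonneg hG j)]
  exact pow_le_pow_left₀ (Real.sqrt_nonneg _) (sqrt_eigenvalues_le_svalI_zero hG j) 2

theorem exists_sqrt_eigenvalues_eq_svalI_zero {G : Matrix (Fin m) (Fin n) ℝ}
    (hG : (Gᵀ * G).IsHermitian) (hn : 0 < n) : ∃ j, √(hG.eigenvalues j) = svalI G 0 :=
  ⟨Fin.revPerm.trans (Tuple.sort _) ⟨0, hn⟩, by rw [svalI, dif_pos hn]; rfl⟩

theorem multTop_eq_card {G : Matrix (Fin m) (Fin n) ℝ} (hG : (Gᵀ * G).IsHermitian) :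
    multTop G = Fintype.card {j // hG.eigenvalues j = svalI G 0 ^ 2} := by
  rw [multTop, Nat.card_eq_fintype_card]
  refine Fintype.card_congr (Equiv.subtypeEquiv
    (Fin.revPerm.trans (Tuple.sort fun j => √(hG.eigenvalues j))) fun i => ?_)
  exact Real.sqrt_eq_iff_eq_sq (eigenvalues_transpose_mul_self_nonneg hG _)
    (svalI_zero_nonneg G)

theorem posSemidef_svalI_zero_sq_smul_one_sub (G : Matrix (Fin m) (Fin n) ℝ) :
    (svalI G 0 ^ 2 • 1 - Gᵀ * G).PosSemidef := by
  have hG := isHermitian_transpose_mul_self G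
  obtain ⟨V, hV, hGV⟩ := hG.exists_orthogonal_diagonalization
  exact posSemidef_smul_one_sub_of_le hV hGV (eigenvalues_le_svalI_zero_sq hG)

theorem dotProduct_smul_one_sub_mulVec (G : Matrix (Fin m) (Fin n) ℝ) (c : ℝ) (v : Fin n → ℝ) :
    v ⬝ᵥ ((c • 1 - Gᵀ * G) *ᵥ v) = c * (v ⬝ᵥ v) - (G *ᵥ v) ⬝ᵥ (G *ᵥ v) := by
  rw [sub_mulVec, smul_mulVec, one_mulVec, dotProduct_sub, dotProduct_smul, smul_eq_mul,
    mulVec_dotProduct_mulVec]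

theorem mulVec_dotProduct_self_le (G : Matrix (Fin m) (Fin n) ℝ) (v : Fin n → ℝ) :
    (G *ᵥ v) ⬝ᵥ (G *ᵥ v) ≤ svalI G 0 ^ 2 * (v ⬝ᵥ v) := by
  have h := (posSemidef_svalI_zero_sq_smul_one_sub G).dotProduct_mulVec_nonneg v
  rw [star_trivial, dotProduct_smul_one_sub_mulVec] at h
  linarith

theorem mem_eigenspace_of_mulVec_dotProduct_self_eq {G : Matrix (Fin m) (Fin n) ℝ}
    {v : Fin n → ℝ} (h : (G *ᵥ v) ⬝ᵥ (G *ᵥ v) = svalI G 0 ^ 2 * (v ⬝ᵥ v)) :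
    v ∈ Module.End.eigenspace (toLin' (Gᵀ * G)) (svalI G 0 ^ 2) := by
  have h0 := ((posSemidef_svalI_zero_sq_smul_one_sub G).dotProduct_mulVec_zero_iff v).mp
    (by rw [star_trivial, dotProduct_smul_one_sub_mulVec, h, sub_self])
  rw [Module.End.mem_eigenspace_iff, toLin'_apply]
  rw [sub_mulVec, smul_mulVec, one_mulVec, sub_eq_zero] at h0
  exact h0.symm

theorem finrank_eigenspace_svalI_zero_sq_le_multTop (G : Matrix (Fin m) (Fin n) ℝ) :
    Module.finrank ℝ (Module.End.eigenspace (toLin' (Gᵀ * G)) (svalI G 0 ^ 2)) ≤ multTop G := by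
  have hG := isHermitian_transpose_mul_self G
  obtain ⟨V, hV, hGV⟩ := hG.exists_orthogonal_diagonalization
  rw [multTop_eq_card hG]
  exact finrank_eigenspace_le_card hV hGV _

theorem traceNorm_zero : traceNorm (0 : Matrix (Fin m) (Fin n) ℝ) = 0 := by
  have h := isHermitian_transpose_mul_self (0 : Matrix (Fin m) (Fin n) ℝ)
  rw [traceNorm_eq_sum_sqrt_eigenvalues h, h.eigenvalues_eq_zero_iff.mpr (by simp)]
  simp

theorem frobInner_vecMulVec (G : Matrix (Fin m) (Fin n) ℝ) (a : Fin m → ℝ) (b : Fin n → ℝ) :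
    frobInner G (vecMulVec a b) = a ⬝ᵥ (G *ᵥ b) := by
  simp only [frobInner, vecMulVec_apply, dotProduct, mulVec, Finset.mul_sum]
  exact Finset.sum_congr rfl fun _ _ => Finset.sum_congr rfl fun _ _ => by ring

theorem traceNorm_vecMulVec_le (a : Fin m → ℝ) (b : Fin n → ℝ) :
    traceNorm (vecMulVec a b) ≤ √(a ⬝ᵥ a) * √(b ⬝ᵥ b) := by
  obtain ⟨Q, hQ, hQA⟩ := exists_frobInner_eq_traceNorm (vecMulVec a b)
  rw [← hQA, frobInner_vecMulVec]
  calc a ⬝ᵥ (Q *ᵥ b) ≤ √(a ⬝ᵥ a) * √((Q *ᵥ b) ⬝ᵥ (Q *ᵥ b)) := dotProduct_le_sqrt_mul_sqrt _ _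
    _ ≤ √(a ⬝ᵥ a) * √(b ⬝ᵥ b) := by gcongr; exact hQ b

theorem exists_traceNorm_le_one_frobInner_eq (G : Matrix (Fin m) (Fin n) ℝ) :
    ∃ Z, traceNorm Z ≤ 1 ∧ frobInner G Z = svalI G 0 := by
  rcases (svalI_zero_nonneg G).eq_or_lt with hσ | hσ
  · exact ⟨0, by simp [traceNorm_zero], by simp [frobInner, ← hσ]⟩
  have hG := isHermitian_transpose_mul_self G
  obtain ⟨V, hV, hGV⟩ := hG.exists_orthogonal_diagonalization
  have hn : 0 < n := Nat.pos_of_ne_zero fun hn => by subst hn; simp [svalI] at hσ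
  obtain ⟨j, hj⟩ := exists_sqrt_eigenvalues_eq_svalI_zero hG hn
  set σ := svalI G 0
  have hσ0 : σ ≠ 0 := hσ.ne'
  have hGb : (G *ᵥ Vᵀ j) ⬝ᵥ (G *ᵥ Vᵀ j) = σ ^ 2 := by
    rw [mulVec_transpose_dotProduct_self hV hGV, ← hj,
      Real.sq_sqrt (eigenvalues_transpose_mul_self_nonneg hG j)]
  refine ⟨vecMulVec (σ⁻¹ • (G *ᵥ Vᵀ j)) (Vᵀ j), ?_, ?_⟩
  · refine (traceNorm_vecMulVec_le _ _).trans_eq ?_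
    have h1 : σ⁻¹ * (σ⁻¹ * σ ^ 2) = 1 := by field_simp
    rw [smul_dotProduct, dotProduct_smul, hGb, transpose_dotProduct_transpose hV, one_apply_eq,
      smul_eq_mul, smul_eq_mul, h1, Real.sqrt_one, one_mul]
  · rw [frobInner_vecMulVec, smul_dotProduct, hGb, smul_eq_mul]
    field_simp

theorem rank_le_multTop_of_isMaxOn {G X : Matrix (Fin m) (Fin n) ℝ} (hX : traceNorm X ≤ 1)
    (hmax : IsMaxOn (frobInner G) {Z | traceNorm Z ≤ 1} X) : X.rank ≤ multTop G := by
  have hXh := isHermitian_transpose_mul_self X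
  obtain ⟨U, hU, hXU⟩ := hXh.exists_orthogonal_diagonalization
  set μ := hXh.eigenvalues
  set σ := svalI G 0
  have hσ : 0 ≤ σ := svalI_zero_nonneg G
  have hcol : ∀ j, (G *ᵥ Uᵀ j) ⬝ᵥ (X *ᵥ Uᵀ j) = σ * √(μ j) := by
    have hle j := mulVec_transpose_dotProduct_le hσ (mulVec_dotProduct_self_le G) hU hXU j
    have hsum : ∑ j, σ * √(μ j) ≤ ∑ j, (G *ᵥ Uᵀ j) ⬝ᵥ (X *ᵥ Uᵀ j) := by
      obtain ⟨Z, hZ, hGZ⟩ := exists_traceNorm_le_one_frobInner_eq G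
      rw [← Finset.mul_sum, ← traceNorm_eq_sum_sqrt_eigenvalues hXh,
        ← frobInner_eq_sum_mulVec_dotProduct hU]
      calc σ * traceNorm X ≤ σ := mul_le_of_le_one_right hσ hX
        _ = frobInner G Z := hGZ.symm
        _ ≤ frobInner G X := isMaxOn_iff.mp hmax Z hZ
    exact fun j => (Finset.sum_eq_sum_iff_of_le fun j _ => hle j).mp
      ((Finset.sum_le_sum fun j _ => hle j).antisymm hsum) j (Finset.mem_univ j)
  -- equality in Cauchy–Schwarz puts every column of `U` outside `ker X` into the top eigenspace
  have hmem : ∀ j : {j // μ j ≠ 0},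
      Uᵀ j ∈ Module.End.eigenspace (toLin' (Gᵀ * G)) (σ ^ 2) := by
    rintro ⟨j, hj⟩
    refine mem_eigenspace_of_mulVec_dotProduct_self_eq
      (le_antisymm (mulVec_dotProduct_self_le G _) ?_)
    have hμ : 0 < √(μ j) :=
      Real.sqrt_pos.mpr ((eigenvalues_transpose_mul_self_nonneg hXh j).lt_of_ne' hj)
    have hCS := dotProduct_le_sqrt_mul_sqrt (G *ᵥ Uᵀ j) (X *ᵥ Uᵀ j)
    rw [hcol j, mulVec_transpose_dotProduct_self hU hXU] at hCS
    rw [transpose_dotProduct_transpose hU, one_apply_eq, mul_one,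
      ← Real.le_sqrt hσ (by simpa using dotProduct_star_self_nonneg (G *ᵥ Uᵀ j))]
    exact le_of_mul_le_mul_right hCS hμ
  have hUt : IsUnit Uᵀ := (Units.mk Uᵀ U hU (mul_eq_one_comm.mp hU)).isUnit
  have hli : LinearIndependent ℝ fun j : {j // μ j ≠ 0} =>
      (⟨Uᵀ j, hmem j⟩ : Module.End.eigenspace (toLin' (Gᵀ * G)) (σ ^ 2)) :=
    .of_comp (Submodule.subtype _) <|
      (linearIndependent_rows_of_isUnit hUt).comp _ Subtype.val_injective
  calc X.rank = Fintype.card {j // μ j ≠ 0} := rank_eq_card_eigenvalues_ne_zero hXh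
    _ ≤ _ := hli.fintype_card_le_finrank
    _ ≤ multTop G := finrank_eigenspace_svalI_zero_sq_le_multTop G

theorem svalsFin_neg (G : Matrix (Fin m) (Fin n) ℝ) : svalsFin (-G) = svalsFin G := by
  have h : (-G)ᵀ * -G = Gᵀ * G := by simp
  simp only [svalsFin, h]

theorem multTop_neg (G : Matrix (Fin m) (Fin n) ℝ) : multTop (-G) = multTop G := by
  simp only [multTop, svalI, svalsFin_neg]

theorem rank_le_multTop_of_isMinOn {G X : Matrix (Fin m) (Fin n) ℝ} (hX : traceNorm X ≤ 1)
    (hmin : IsMinOn (frobInner G) {Z | traceNorm Z ≤ 1} X) : X.rank ≤ multTop G := by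
  have hneg : frobInner (-G) = fun Z => -frobInner G Z := funext fun Z => by simp [frobInner]
  rw [← multTop_neg]
  exact rank_le_multTop_of_isMaxOn hX (hneg ▸ hmin.neg)

end TopSingularValue

section Calculus

variable {E : Type*} [NormedAddCommGroup E] [NormedSpace ℝ E] {f : E → ℝ} {f' : E →L[ℝ] ℝ}
  {x : E}

theorem ConvexOn.apply_sub_le_of_hasFDerivAt (hf : ConvexOn ℝ Set.univ f)
    (hx : HasFDerivAt f f' x) (y : E) : f' (y - x) ≤ f y - f x := by
  have hline : HasDerivAt (f ∘ AffineMap.lineMap (k := ℝ) x y) (f' (y - x)) 0 :=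
    hx.comp_hasDerivAt_of_eq 0 AffineMap.hasDerivAt_lineMap (AffineMap.lineMap_apply_zero x y).symm
  have h := (hf.comp_affineMap (AffineMap.lineMap x y)).le_slope_of_hasDerivAt
    (Set.mem_univ 0) (Set.mem_univ 1) zero_lt_one hline
  simpa [slope_def_field] using h

theorem IsMinOn.apply_sub_nonneg_of_hasFDerivAt {s : Set E} (hs : Convex ℝ s)
    (hmin : IsMinOn f s x) (hx : x ∈ s) (hf : HasFDerivAt f f' x) {y : E} (hy : y ∈ s) :
    0 ≤ f' (y - x) :=
  hmin.localize.hasFDerivWithinAt_nonneg hf.hasFDerivWithinAt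
    (sub_mem_posTangentConeAt_of_segment_subset (hs.segment_subset hx hy))

end Calculus

/-- For convex differentiable `f`, every minimizer `X*` of `f`
over the unit trace-norm ball satisfies `rank(X*) ≤ #σ₁(∇f(X*))`; moreover, if
`∇f` is nonzero on the set of minimizers, then for any two minimizers `X₁, X₂`,
`rank(X₂) ≤ #σ₁(∇f(X₁))` (i.e. `max rank ≤ min multiplicity`). -/
theorem stmt2 {m n : ℕ} (f : Matrix (Fin m) (Fin n) ℝ → ℝ)
    (gradf : Matrix (Fin m) (Fin n) ℝ → Matrix (Fin m) (Fin n) ℝ)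
    (hconv : ConvexOn ℝ Set.univ f)
    (hdiff : ∀ X, HasFDerivAt f (frobCLM (gradf X)) X) :
    (∀ Xstar, traceNorm Xstar ≤ 1 → (∀ Z, traceNorm Z ≤ 1 → f Xstar ≤ f Z) →
      Xstar.rank ≤ multTop (gradf Xstar)) ∧
    ((∀ Xstar, traceNorm Xstar ≤ 1 → (∀ Z, traceNorm Z ≤ 1 → f Xstar ≤ f Z) →
        gradf Xstar ≠ 0) →
      ∀ X1 X2 : Matrix (Fin m) (Fin n) ℝ,
        traceNorm X1 ≤ 1 → (∀ Z, traceNorm Z ≤ 1 → f X1 ≤ f Z) →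
        traceNorm X2 ≤ 1 → (∀ Z, traceNorm Z ≤ 1 → f X2 ≤ f Z) →
        X2.rank ≤ multTop (gradf X1)) := by
  have hball : Convex ℝ {Z : Matrix (Fin m) (Fin n) ℝ | traceNorm Z ≤ 1} := by
    simpa using convexOn_traceNorm.convex_le 1
  have first_order : ∀ X, traceNorm X ≤ 1 → (∀ Z, traceNorm Z ≤ 1 → f X ≤ f Z) →
      IsMinOn (frobInner (gradf X)) {Z | traceNorm Z ≤ 1} X := by
    refine fun X hX hmin => isMinOn_iff.mpr fun Z hZ => ?_
    have h : 0 ≤ frobInner (gradf X) (Z - X) :=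
      (isMinOn_iff.mpr hmin).apply_sub_nonneg_of_hasFDerivAt hball hX (hdiff X) hZ
    rw [frobInner_sub_right] at h
    linarith
  refine ⟨fun X hX hmin => rank_le_multTop_of_isMinOn hX (first_order X hX hmin), ?_⟩
  intro _ X1 X2 hX1 hmin1 hX2 hmin2
  have hgrad : frobInner (gradf X1) (X2 - X1) ≤ f X2 - f X1 :=
    hconv.apply_sub_le_of_hasFDerivAt (hdiff X1) X2
  rw [frobInner_sub_right] at hgrad
  refine rank_le_multTop_of_isMinOn hX2 (isMinOn_iff.mpr fun Z hZ => ?_)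
  linarith [isMinOn_iff.mp (first_order X1 hX1 hmin1) Z hZ, hmin2 X1 hX1]
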